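/- arXiv:math/0310332 — 2 statements merged into one kernel-verified Lean document; each statement's English description precedes it below -/
import Mathlib

section
/- Let r ≥ 2 and let n₁ ≥ n₂ ≥ … ≥ n_r ≥ 1 with n = n₁ + n₂ + … + n_r, and let α be the number of indices i with n_i odd. If 3·α > n, then the isometric path number of the complete r-partite graph K_{n₁,n₂,…,n_r} equals ⌈(n+α)/4⌉. -/
open SimpleGraph

/-- A walk is an *isometric path* if it is a path whose length equals the
distance in `G` between its two endpoints (i.e. a shortest path). -/
def SimpleGraph.Walk.IsIsometricPath {V : Type*} {G : SimpleGraph V} {u v : V}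
    (p : G.Walk u v) : Prop :=
  p.IsPath ∧ p.length = G.dist u v

/-- The *isometric path number* of `G`: the minimum number of isometric paths
needed to cover all vertices of `G`. -/
noncomputable def isometricPathNumber {V : Type*} (G : SimpleGraph V) : ℕ :=
  sInf {k | ∃ (u v : Fin k → V) (p : ∀ i, G.Walk (u i) (v i)),
    (∀ i, (p i).IsIsometricPath) ∧ ∀ w : V, ∃ i, w ∈ (p i).support}

/-!
An isometric path in a complete multipartite graph has length at most two, and when it has three
vertices its endpoints lie in a common part. Hence it contributes at most `2` to
`∑ i, ⌈cᵢ / 2⌉`, where `cᵢ` counts its vertices in part `i`, so a cover by `k` isometric paths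
forces `∑ i, ⌈nᵢ / 2⌉ = D + α ≤ 2k`, with `D = ∑ i, ⌊nᵢ / 2⌋` and `N = 2D + α`.

Conversely, `3α > N` says `D < α`. Split every part into `⌊nᵢ / 2⌋` pairs plus, for odd `nᵢ`, one
unpaired vertex. By Hall's theorem each pair can be assigned a distinct odd part other than its
own, and the pair is joined by a path of length two through that part's unpaired vertex. The
`α - D` unpaired vertices left over lie in distinct parts, so they form a clique and are covered by
`⌈(α - D) / 2⌉` edges. In total `D + ⌈(α - D) / 2⌉ = ⌈(N + α) / 4⌉` paths.
-/

open Finset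

namespace SimpleGraph

variable {V : Type*} {G : SimpleGraph V} {u v w : V}

theorem Walk.isIsometricPath_iff {p : G.Walk u v} :
    p.IsIsometricPath ↔ p.length = G.dist u v :=
  ⟨And.right, fun h => ⟨p.isPath_of_length_eq_dist h, h⟩⟩

theorem Walk.isIsometricPath_cons_cons (huw : G.Adj u w) (hwv : G.Adj w v) (hne : u ≠ v)
    (hnadj : ¬G.Adj u v) : (Walk.cons huw (Walk.cons hwv Walk.nil)).IsIsometricPath := by
  have hreach : G.Reachable u v := ⟨Walk.cons huw (Walk.cons hwv Walk.nil)⟩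
  have hle := G.dist_le (Walk.cons huw (Walk.cons hwv Walk.nil))
  have hlt := hreach.one_lt_dist_of_ne_of_not_adj hne hnadj
  rw [Walk.isIsometricPath_iff]
  simp only [Walk.length_cons, Walk.length_nil] at hle ⊢
  omega

variable (G) in
def IsometricPathCoverable (S : Set V) (k : ℕ) : Prop :=
  ∃ P : Finset (Σ u v : V, G.Walk u v), #P ≤ k ∧ (∀ p ∈ P, p.2.2.IsIsometricPath) ∧
    ∀ w ∈ S, ∃ p ∈ P, w ∈ p.2.2.support

namespace IsometricPathCoverable

variable {S T : Set V} {k m : ℕ}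

theorem mono (h : G.IsometricPathCoverable T k) (hST : S ⊆ T) (hkm : k ≤ m) :
    G.IsometricPathCoverable S m := by
  obtain ⟨P, hP, hiso, hcov⟩ := h
  exact ⟨P, hP.trans hkm, hiso, fun w hw => hcov w (hST hw)⟩

theorem union (hS : G.IsometricPathCoverable S k) (hT : G.IsometricPathCoverable T m) :
    G.IsometricPathCoverable (S ∪ T) (k + m) := by
  classical
  obtain ⟨P, hP, hisoP, hcovP⟩ := hS
  obtain ⟨Q, hQ, hisoQ, hcovQ⟩ := hT
  refine ⟨P ∪ Q, (card_union_le P Q).trans (by omega), fun p hp => ?_, fun w hw => ?_⟩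
  · rcases mem_union.1 hp with hp | hp
    exacts [hisoP p hp, hisoQ p hp]
  · rcases hw with hw | hw
    · obtain ⟨p, hp, hwp⟩ := hcovP w hw
      exact ⟨p, mem_union_left Q hp, hwp⟩
    · obtain ⟨p, hp, hwp⟩ := hcovQ w hw
      exact ⟨p, mem_union_right P hp, hwp⟩

end IsometricPathCoverable

theorem Reachable.isometricPathCoverable_pair (h : G.Reachable u v) :
    G.IsometricPathCoverable {u, v} 1 := by
  obtain ⟨p, hp⟩ := h.exists_path_of_dist
  refine ⟨{⟨u, v, p⟩}, by simp, by simpa using Walk.isIsometricPath_iff.2 hp.2, ?_⟩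
  rintro w (rfl | rfl)
  exacts [⟨_, mem_singleton_self _, p.start_mem_support⟩,
    ⟨_, mem_singleton_self _, p.end_mem_support⟩]

theorem isometricPathCoverable_of_reachable [DecidableEq V] (S : Finset V)
    (hS : ∀ a ∈ S, ∀ b ∈ S, G.Reachable a b) :
    G.IsometricPathCoverable S ((#S + 1) / 2) := by
  induction hk : #S using Nat.strong_induction_on generalizing S with
  | _ k ih =>
  obtain rfl | ⟨a, ha⟩ := S.eq_empty_or_nonempty
  · exact ⟨∅, by simp, by simp, by simp⟩
  obtain hS₁ | ⟨b, hb⟩ := (S.erase a).eq_empty_or_nonempty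
  · have hk₁ : 1 ≤ k := hk ▸ card_pos.2 ⟨a, ha⟩
    refine (hS a ha a ha).isometricPathCoverable_pair.mono (fun w hw => ?_) (by omega)
    by_contra hwa
    exact notMem_empty w (hS₁ ▸ mem_erase.2 ⟨by simpa using hwa, hw⟩)
  · have hbS : b ∈ S := mem_of_mem_erase hb
    have hk₂ : 2 ≤ k := by
      have := card_pos.2 ⟨b, hb⟩
      rw [card_erase_of_mem ha] at this
      omega
    have hcard : #((S.erase a).erase b) = k - 2 := by
      rw [card_erase_of_mem hb, card_erase_of_mem ha, hk]; omega
    have hrest := ih _ (by omega) ((S.erase a).erase b)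
      (fun x hx y hy => hS x (mem_of_mem_erase (mem_of_mem_erase hx))
        y (mem_of_mem_erase (mem_of_mem_erase hy))) hcard
    refine ((hS a ha b hbS).isometricPathCoverable_pair.union hrest).mono
      (fun w hw => ?_) (by omega)
    by_cases hwa : w = a
    · exact Or.inl (Or.inl hwa)
    by_cases hwb : w = b
    · exact Or.inl (Or.inr hwb)
    · exact Or.inr (by simp [hwa, hwb, hw])

theorem isometricPathNumber_eq_of_coverable {m : ℕ} (hup : G.IsometricPathCoverable Set.univ m)
    (hlow : ∀ (k : ℕ) (u v : Fin k → V) (p : ∀ i, G.Walk (u i) (v i)),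
      (∀ i, (p i).IsIsometricPath) → (∀ w, ∃ i, w ∈ (p i).support) → m ≤ k) :
    isometricPathNumber G = m := by
  obtain ⟨P, hPm, hiso, hcov⟩ := hup
  have e : Fin #P ≃ P := P.equivFin.symm
  have hmem : #P ∈ {k | ∃ (u v : Fin k → V) (p : ∀ i, G.Walk (u i) (v i)),
      (∀ i, (p i).IsIsometricPath) ∧ ∀ w : V, ∃ i, w ∈ (p i).support} := by
    refine ⟨fun i => (e i).1.1, fun i => (e i).1.2.1, fun i => (e i).1.2.2,
      fun i => hiso _ (e i).2, fun w => ?_⟩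
    obtain ⟨p, hp, hwp⟩ := hcov w trivial
    refine ⟨e.symm ⟨p, hp⟩, ?_⟩
    beta_reduce
    rwa [show (e (e.symm ⟨p, hp⟩)).1 = p by simp]
  refine le_antisymm ((Nat.sInf_le hmem).trans hPm) (le_csInf ⟨_, hmem⟩ ?_)
  rintro k ⟨u, v, p, hiso, hcov⟩
  exact hlow k u v p hiso hcov

end SimpleGraph

theorem Finset.exists_injective_forall_mem_erase {κ ι : Type*} [Fintype κ] [DecidableEq ι]
    (T : Finset ι) (c : κ → ι) (h : Fintype.card κ < #T) :
    ∃ f : κ → ι, Function.Injective f ∧ ∀ d, f d ∈ T.erase (c d) := by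
  rw [← all_card_le_biUnion_card_iff_exists_injective]
  intro s
  obtain rfl | ⟨d, hd⟩ := s.eq_empty_or_nonempty
  · simp
  calc #s ≤ Fintype.card κ := card_le_univ s
    _ ≤ #T - 1 := by omega
    _ ≤ #(T.erase (c d)) := pred_card_le_card_erase
    _ ≤ #(s.biUnion fun d => T.erase (c d)) :=
      card_le_card (subset_biUnion_of_mem (fun d => T.erase (c d)) hd)

section CompleteMultipartite

variable {ι : Type*} {V : ι → Type*}

theorem completeMultipartiteGraph_adj {u v : Σ i, V i} :
    (completeMultipartiteGraph V).Adj u v ↔ u.1 ≠ v.1 := Iff.rfl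

theorem completeMultipartiteGraph_dist_le_two (u v : Σ i, V i) :
    (completeMultipartiteGraph V).dist u v ≤ 2 := by
  by_cases hreach : (completeMultipartiteGraph V).Reachable u v
  · obtain ⟨p⟩ := hreach
    cases p with
    | nil => simp
    | @cons _ w _ huw q =>
      by_cases hwv : w.1 = v.1
      · have huv : (completeMultipartiteGraph V).Adj u v := by
          rw [completeMultipartiteGraph_adj] at huw ⊢; rwa [← hwv]
        exact (dist_le (Walk.cons huv Walk.nil)).trans (by simp)
      · exact (dist_le (Walk.cons huw (Walk.cons hwv Walk.nil))).trans_eq rfl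
  · simp [dist_eq_zero_of_not_reachable hreach]

variable [Fintype ι] [DecidableEq ι]

def halfWeight (s : Finset (Σ i, V i)) : ℕ :=
  ∑ i, (#{w ∈ s | w.1 = i} + 1) / 2

theorem halfWeight_mono {s t : Finset (Σ i, V i)} (h : s ⊆ t) : halfWeight s ≤ halfWeight t :=
  sum_le_sum fun i _ => Nat.div_le_div_right (by gcongr)

theorem halfWeight_union_le [DecidableEq (Σ i, V i)] (s t : Finset (Σ i, V i)) :
    halfWeight (s ∪ t) ≤ halfWeight s + halfWeight t := by
  unfold halfWeight
  rw [← sum_add_distrib]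
  refine sum_le_sum fun i _ => ?_
  have := card_union_le {w ∈ s | w.1 = i} {w ∈ t | w.1 = i}
  rw [← filter_union] at this
  omega

theorem halfWeight_biUnion_le [DecidableEq (Σ i, V i)] {κ : Type*} (K : Finset κ)
    (g : κ → Finset (Σ i, V i)) : halfWeight (K.biUnion g) ≤ ∑ t ∈ K, halfWeight (g t) := by
  classical
  induction K using Finset.induction_on with
  | empty => simp [halfWeight]
  | insert t K ht ih =>
    rw [biUnion_insert, sum_insert ht]
    exact (halfWeight_union_le _ _).trans (by omega)

theorem halfWeight_le_card (s : Finset (Σ i, V i)) : halfWeight s ≤ #s := by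
  rw [card_eq_sum_card_fiberwise (f := Sigma.fst) (t := univ) (fun _ _ => mem_univ _)]
  exact sum_le_sum fun i _ => by omega

theorem halfWeight_pair_le_one [DecidableEq (Σ i, V i)] {u v : Σ i, V i} (h : u.1 = v.1) :
    halfWeight {u, v} ≤ 1 := by
  rw [halfWeight, sum_eq_single u.1]
  · have := card_le_two (a := u) (b := v)
    have := card_filter_le ({u, v} : Finset (Σ i, V i)) (·.1 = u.1)
    omega
  · intro i _ hi
    rw [filter_false_of_mem (by simp [← h, Ne.symm hi])]
    simp
  · simp

theorem card_filter_fst_eq [∀ i, Fintype (V i)] (i : ι) :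
    #{w : Σ i, V i | w.1 = i} = Fintype.card (V i) := by
  rw [← card_univ, ← card_map (Function.Embedding.sigmaMk (β := V) i)]
  congr 1
  ext ⟨j, x⟩
  simp only [mem_filter, mem_univ, true_and, mem_map, Function.Embedding.sigmaMk_apply]
  constructor
  · rintro rfl
    exact ⟨x, rfl⟩
  · rintro ⟨y, h⟩
    cases h
    rfl

theorem halfWeight_univ [∀ i, Fintype (V i)] :
    halfWeight (univ : Finset (Σ i, V i)) = ∑ i, (Fintype.card (V i) + 1) / 2 :=
  sum_congr rfl fun i _ => by rw [card_filter_fst_eq]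

variable [∀ i, DecidableEq (V i)]

theorem halfWeight_support_le_two {u v : Σ i, V i} {p : (completeMultipartiteGraph V).Walk u v}
    (hp : p.IsIsometricPath) : halfWeight p.support.toFinset ≤ 2 := by
  have hlen : p.length ≤ 2 := hp.2 ▸ completeMultipartiteGraph_dist_le_two u v
  cases p with
  | nil => exact (halfWeight_le_card _).trans ((List.toFinset_card_le _).trans (by simp))
  | @cons _ w _ huw q =>
  cases q with
  | nil => exact (halfWeight_le_card _).trans ((List.toFinset_card_le _).trans (by simp))
  | cons hwv q =>
  cases q with
  | cons _ _ => simp at hlen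
  | nil =>
    have huv : u.1 = v.1 := by
      by_contra huv
      have := hp.2
      rw [dist_eq_one_iff_adj.2 huv] at this
      simp at this
    calc halfWeight (Walk.cons huw (Walk.cons hwv Walk.nil)).support.toFinset
        ≤ halfWeight ({u, v} ∪ {w}) := halfWeight_mono (by intro x; simp; tauto)
      _ ≤ halfWeight {u, v} + halfWeight {w} := halfWeight_union_le _ _
      _ ≤ 1 + 1 := add_le_add (halfWeight_pair_le_one huv)
          ((halfWeight_le_card _).trans_eq (card_singleton w))

theorem sum_card_add_one_div_two_le_of_cover [∀ i, Fintype (V i)] {k : ℕ} {u v : Fin k → Σ i, V i}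
    (p : ∀ t, (completeMultipartiteGraph V).Walk (u t) (v t)) (hp : ∀ t, (p t).IsIsometricPath)
    (hcov : ∀ w, ∃ t, w ∈ (p t).support) :
    ∑ i, (Fintype.card (V i) + 1) / 2 ≤ 2 * k := by
  calc ∑ i, (Fintype.card (V i) + 1) / 2 = halfWeight (univ : Finset (Σ i, V i)) :=
        halfWeight_univ.symm
    _ ≤ halfWeight (univ.biUnion fun t => (p t).support.toFinset) :=
        halfWeight_mono fun w _ => by simpa using hcov w
    _ ≤ ∑ t, halfWeight (p t).support.toFinset := halfWeight_biUnion_le _ _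
    _ ≤ ∑ _t : Fin k, 2 := sum_le_sum fun t _ => halfWeight_support_le_two (hp t)
    _ = 2 * k := by simp [mul_comm]

end CompleteMultipartite

section Arithmetic

variable {ι : Type*} [Fintype ι] (n : ι → ℕ)

theorem sum_eq_two_mul_sum_div_two_add_card_odd :
    ∑ i, n i = 2 * ∑ i, n i / 2 + #{i | Odd (n i)} := by
  rw [card_filter, mul_sum, ← sum_add_distrib]
  refine sum_congr rfl fun i _ => ?_
  split_ifs with h
  · have := Nat.odd_iff.1 h; omega
  · have := Nat.not_odd_iff.1 h; omega

theorem sum_add_one_div_two_eq :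
    ∑ i, (n i + 1) / 2 = ∑ i, n i / 2 + #{i | Odd (n i)} := by
  rw [card_filter, ← sum_add_distrib]
  refine sum_congr rfl fun i _ => ?_
  split_ifs with h
  · have := Nat.odd_iff.1 h; omega
  · have := Nat.not_odd_iff.1 h; omega

end Arithmetic

section Construction

variable {ι : Type*} {n : ι → ℕ}

def pairFst (d : Σ i, Fin (n i / 2)) : Σ i, Fin (n i) :=
  ⟨d.1, ⟨2 * d.2, by have := d.2.isLt; omega⟩⟩

def pairSnd (d : Σ i, Fin (n i / 2)) : Σ i, Fin (n i) :=
  ⟨d.1, ⟨2 * d.2 + 1, by have := d.2.isLt; omega⟩⟩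

def pairWalk (d : Σ i, Fin (n i / 2)) (w : Σ i, Fin (n i)) (hw : w.1 ≠ d.1) :
    (completeMultipartiteGraph fun i => Fin (n i)).Walk (pairFst d) (pairSnd d) :=
  .cons (completeMultipartiteGraph_adj.2 hw.symm) (.cons (completeMultipartiteGraph_adj.2 hw) .nil)

theorem pairWalk_support (d : Σ i, Fin (n i / 2)) (w : Σ i, Fin (n i)) (hw : w.1 ≠ d.1) :
    (pairWalk d w hw).support = [pairFst d, w, pairSnd d] :=
  rfl

theorem pairWalk_isIsometricPath (d : Σ i, Fin (n i / 2)) (w : Σ i, Fin (n i))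
    (hw : w.1 ≠ d.1) : (pairWalk d w hw).IsIsometricPath :=
  Walk.isIsometricPath_cons_cons _ _ (by simp [pairFst, pairSnd, Fin.ext_iff])
    (by simp [pairFst, pairSnd])

def IsUnpaired (w : Σ i, Fin (n i)) : Prop :=
  2 * (n w.1 / 2) ≤ w.2

theorem IsUnpaired.odd {w : Σ i, Fin (n i)} (hw : IsUnpaired w) : Odd (n w.1) :=
  Nat.odd_iff.2 (by have := w.2.isLt; unfold IsUnpaired at hw; omega)

theorem IsUnpaired.eq_of_fst_eq {a b : Σ i, Fin (n i)} (ha : IsUnpaired a) (hb : IsUnpaired b)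
    (h : a.1 = b.1) : a = b := by
  obtain ⟨i, x⟩ := a
  obtain ⟨j, y⟩ := b
  obtain rfl : i = j := h
  unfold IsUnpaired at ha hb
  dsimp only at ha hb
  have := x.isLt
  have := y.isLt
  congr
  ext
  omega

theorem isometricPathCoverable_paired_union_range [Fintype ι]
    (m : (Σ i, Fin (n i / 2)) → Σ i, Fin (n i)) (hm : ∀ d, (m d).1 ≠ d.1) :
    (completeMultipartiteGraph fun i => Fin (n i)).IsometricPathCoverable
      ({w | ¬IsUnpaired w} ∪ Set.range m) (∑ i, n i / 2) := by
  classical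
  refine ⟨univ.image fun d => ⟨_, _, pairWalk d (m d) (hm d)⟩, ?_, ?_, ?_⟩
  · exact card_image_le.trans (by simp [Fintype.card_sigma])
  · simp only [mem_image, mem_univ, true_and, forall_exists_index]
    rintro _ d rfl
    exact pairWalk_isIsometricPath d (m d) (hm d)
  · simp only [exists_mem_image, mem_univ, true_and]
    rintro w (hx | ⟨d, rfl⟩)
    · obtain ⟨i, x⟩ := w
      simp only [Set.mem_ofPred_eq, IsUnpaired, not_le] at hx
      refine ⟨⟨i, ⟨x / 2, by omega⟩⟩, ?_⟩
      rw [pairWalk_support]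
      simp only [List.mem_cons, pairFst, pairSnd, Sigma.mk.injEq, heq_eq_eq,
        Fin.ext_iff, true_and]
      rcases Nat.mod_two_eq_zero_or_one x with h | h
      · exact Or.inl (by omega)
      · exact Or.inr (Or.inr (Or.inl (by omega)))
    · exact ⟨d, by simp [pairWalk_support]⟩

theorem isometricPathCoverable_univ_of_sum_div_two_lt [Fintype ι]
    (h : ∑ i, n i / 2 < #{i | Odd (n i)}) :
    (completeMultipartiteGraph fun i => Fin (n i)).IsometricPathCoverable Set.univ
      (∑ i, n i / 2 + (#{i | Odd (n i)} - ∑ i, n i / 2 + 1) / 2) := by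
  classical
  obtain ⟨f, hf_inj, hf⟩ := exists_injective_forall_mem_erase {i | Odd (n i)}
    (Sigma.fst : (Σ i, Fin (n i / 2)) → ι) (by simpa [Fintype.card_sigma] using h)
  have hf_odd (d) : Odd (n (f d)) := (mem_filter.1 (mem_of_mem_erase (hf d))).2
  let m (d : Σ i, Fin (n i / 2)) : Σ i, Fin (n i) :=
    ⟨f d, ⟨n (f d) - 1, by have := (hf_odd d).pos; omega⟩⟩
  let S : Finset (Σ i, Fin (n i)) := {w | IsUnpaired w ∧ w.1 ∉ Set.range f}
  have hS_reach : ∀ a ∈ S, ∀ b ∈ S,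
      (completeMultipartiteGraph fun i => Fin (n i)).Reachable a b := by
    intro a ha b hb
    by_cases hab : a.1 = b.1
    · rw [(mem_filter.1 ha).2.1.eq_of_fst_eq (mem_filter.1 hb).2.1 hab]
    · exact (completeMultipartiteGraph_adj.2 hab).reachable
  have hS_card : #S ≤ #{i | Odd (n i)} - ∑ i, n i / 2 := by
    calc #S ≤ #(({i | Odd (n i)} : Finset ι) \ univ.image f) := by
          refine card_le_card_of_injOn Sigma.fst (fun w hw => ?_) fun a ha b hb hab => ?_
          · obtain ⟨hw, hwf⟩ := (mem_filter.1 hw).2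
            simpa [hw.odd] using hwf
          · exact (mem_filter.1 ha).2.1.eq_of_fst_eq (mem_filter.1 hb).2.1 hab
      _ = #{i | Odd (n i)} - ∑ i, n i / 2 := by
          rw [card_sdiff_of_subset, card_image_of_injective _ hf_inj, card_univ,
            Fintype.card_sigma]
          · simp
          · intro i hi
            obtain ⟨d, -, rfl⟩ := mem_image.1 hi
            exact mem_filter.2 ⟨mem_univ _, hf_odd d⟩
  refine ((isometricPathCoverable_paired_union_range m fun d => ne_of_mem_erase (hf d)).union
    ((isometricPathCoverable_of_reachable S hS_reach).mono subset_rfl (by omega))).mono ?_ le_rfl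
  rintro ⟨i, x⟩ -
  by_cases hx : IsUnpaired (⟨i, x⟩ : Σ i, Fin (n i))
  swap
  · exact Or.inl (Or.inl hx)
  by_cases hi : i ∈ Set.range f
  · obtain ⟨d, rfl⟩ := hi
    refine Or.inl (Or.inr ⟨d, ?_⟩)
    have := x.isLt
    unfold IsUnpaired at hx
    dsimp only at hx
    simp only [m, Sigma.mk.injEq, heq_eq_eq, true_and, Fin.ext_iff]
    omega
  · exact Or.inr (mem_coe.2 (mem_filter.2 ⟨mem_univ _, hx, hi⟩))

end Construction

theorem stmt_1_general (r : ℕ) (n : Fin r → ℕ) (N : ℕ) (hN : N = ∑ i, n i)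
    (α : ℕ) (hα : α = (Finset.univ.filter fun i => Odd (n i)).card)
    (h : 3 * α > N) :
    isometricPathNumber (completeMultipartiteGraph (fun i : Fin r => Fin (n i))) =
      (N + α + 3) / 4 := by
  have hsum := sum_eq_two_mul_sum_div_two_add_card_odd n
  have hceil := sum_add_one_div_two_eq n
  subst hN hα
  apply isometricPathNumber_eq_of_coverable
  · exact (isometricPathCoverable_univ_of_sum_div_two_lt (by omega)).mono subset_rfl (by omega)
  · intro k u v p hp hcov
    have := sum_card_add_one_div_two_le_of_cover p hp hcov
    simp only [Fintype.card_fin] at this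
    omega

theorem stmt_1 (r : ℕ) (hr : 2 ≤ r) (n : Fin r → ℕ) (hpos : ∀ i, 1 ≤ n i)
    (hsorted : Antitone n) (N : ℕ) (hN : N = ∑ i, n i)
    (α : ℕ) (hα : α = (Finset.univ.filter fun i => Odd (n i)).card)
    (h : 3 * α > N) :
    isometricPathNumber (completeMultipartiteGraph (fun i : Fin r => Fin (n i))) =
      (N + α + 3) / 4 :=
  stmt_1_general r n N hN α hα h
end

section
/- If n₃ ≥ 3 is an odd integer, then the isometric path number of the Cartesian product K₂ □ K₂ □ K_{n₃} is at most n₃ + 1. -/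
open SimpleGraph

abbrev V3 (n : ℕ) := (Fin 2 × Fin 2) × Fin n
abbrev G3 (n : ℕ) : SimpleGraph (V3 n) :=
  (completeGraph (Fin 2) □ completeGraph (Fin 2)) □ completeGraph (Fin n)

def ham {n : ℕ} (x y : V3 n) : ℕ :=
  (if x.1.1 = y.1.1 then 0 else 1) + (if x.1.2 = y.1.2 then 0 else 1) +
    (if x.2 = y.2 then 0 else 1)

lemma ham_adj {n : ℕ} {x y : V3 n} (hxy : (G3 n).Adj x y) : ham x y = 1 := by
  rcases hxy with ⟨h1, h2⟩ | ⟨h1, h2⟩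
  · rcases h1 with ⟨h3, h4⟩ | ⟨h3, h4⟩ <;>
      simp_all [ham, top_adj, Prod.ext_iff]
  · simp_all [ham, top_adj]

lemma ham_tri {n : ℕ} (x y z : V3 n) : ham x z ≤ ham x y + ham y z := by
  unfold ham
  split_ifs <;> first | omega | simp_all

lemma ham_le_length {n : ℕ} {u v : V3 n} (p : (G3 n).Walk u v) : ham u v ≤ p.length := by
  induction p with
  | nil => simp [ham]
  | cons hadj q ih =>
    rename_i a b c
    calc ham a c ≤ ham a b + ham b c := ham_tri a b c
    _ ≤ 1 + q.length := by have := ham_adj hadj; omega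
    _ = (SimpleGraph.Walk.cons hadj q).length := by simp [SimpleGraph.Walk.length_cons]; omega

def quad {n : ℕ} {w x y z : V3 n} (h1 : (G3 n).Adj w x) (h2 : (G3 n).Adj x y)
    (h3 : (G3 n).Adj y z) : (G3 n).Walk w z :=
  Walk.cons h1 (Walk.cons h2 (Walk.cons h3 Walk.nil))

lemma quad_iso {n : ℕ} {w x y z : V3 n} (h1 : (G3 n).Adj w x) (h2 : (G3 n).Adj x y)
    (h3 : (G3 n).Adj y z) (ha : w.1.1 ≠ z.1.1) (hb : w.1.2 ≠ z.1.2) (hc : w.2 ≠ z.2) :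
    (quad h1 h2 h3).IsIsometricPath := by
  have hham : ham w z = 3 := by simp [ham, ha, hb, hc]
  have hlen : (quad h1 h2 h3).length = 3 := rfl
  have hr : (G3 n).Reachable w z := ⟨quad h1 h2 h3⟩
  obtain ⟨q, hq⟩ := hr.exists_walk_length_eq_dist
  have h3le : 3 ≤ (G3 n).dist w z := by
    have := ham_le_length q; omega
  have hdle : (G3 n).dist w z ≤ 3 := by
    have := SimpleGraph.dist_le (quad h1 h2 h3); omega
  have hd : (quad h1 h2 h3).length = (G3 n).dist w z := by omega
  exact ⟨(quad h1 h2 h3).isPath_of_length_eq_dist hd, hd⟩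

lemma mem_quad {n : ℕ} {w x y z : V3 n} (h1 : (G3 n).Adj w x) (h2 : (G3 n).Adj x y)
    (h3 : (G3 n).Adj y z) (a : V3 n) (ha : a = w ∨ a = x ∨ a = y ∨ a = z) :
    a ∈ (quad h1 h2 h3).support := by
  simp [quad, Walk.support_cons]; tauto

abbrev K22 : SimpleGraph (Fin 2 × Fin 2) := completeGraph (Fin 2) □ completeGraph (Fin 2)

lemma adj_fst {n : ℕ} {x y : Fin 2 × Fin 2} (c : Fin n) (hxy : K22.Adj x y) :
    (G3 n).Adj (x, c) (y, c) := Or.inl ⟨hxy, rfl⟩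

lemma adj_snd {n : ℕ} (x : Fin 2 × Fin 2) {c c' : Fin n} (hcc : c ≠ c') :
    (G3 n).Adj (x, c) (x, c') := Or.inr ⟨hcc, rfl⟩

lemma k22_adj_fst {a a' b : Fin 2} (h : a ≠ a') : K22.Adj (a, b) (a', b) :=
  Or.inl ⟨h, rfl⟩

lemma k22_adj_snd {a b b' : Fin 2} (h : b ≠ b') : K22.Adj (a, b) (a, b') :=
  Or.inr ⟨h, rfl⟩

def mid (i : ℕ) : Fin 2 × Fin 2 := if i % 2 = 0 then (1, 0) else (0, 1)

lemma adj_mid_left (i : ℕ) : K22.Adj (0, 0) (mid i) := by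
  unfold mid; split
  · exact k22_adj_fst (by decide)
  · exact k22_adj_snd (by decide)

lemma adj_mid_right (i : ℕ) : K22.Adj (mid i) (1, 1) := by
  unfold mid; split
  · exact k22_adj_snd (by decide)
  · exact k22_adj_fst (by decide)

def pathData (n : ℕ) (hn : 3 ≤ n) (i : Fin (n + 1)) :
    Σ u : V3 n, Σ v : V3 n, (G3 n).Walk u v :=
  if hc : i.val = n then
    ⟨(((0 : Fin 2), (0 : Fin 2)), ⟨n - 1, by omega⟩),
     (((1 : Fin 2), (1 : Fin 2)), ⟨0, by omega⟩),
     quad (adj_fst _ (k22_adj_fst (by decide)))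
       (adj_snd ((1 : Fin 2), (0 : Fin 2)) (c' := ⟨0, by omega⟩) (by simp [Fin.ext_iff]; omega))
       (adj_fst _ (k22_adj_snd (by decide)))⟩
  else if hc2 : i.val = n - 1 then
    ⟨(((1 : Fin 2), (1 : Fin 2)), ⟨0, by omega⟩),
     (((0 : Fin 2), (0 : Fin 2)), ⟨1, by omega⟩),
     quad (adj_fst _ (k22_adj_fst (by decide)))
       (adj_snd ((0 : Fin 2), (1 : Fin 2)) (c' := ⟨1, by omega⟩) (by simp [Fin.ext_iff]))
       (adj_fst _ (k22_adj_snd (by decide)))⟩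
  else
    ⟨(((0 : Fin 2), (0 : Fin 2)), ⟨i.val, by omega⟩),
     (((1 : Fin 2), (1 : Fin 2)), ⟨i.val + 1, by have := i.isLt; omega⟩),
     quad (adj_fst _ (adj_mid_left i.val))
       (adj_snd (mid i.val) (c' := ⟨i.val + 1, by have := i.isLt; omega⟩)
         (by simp [Fin.ext_iff]))
       (adj_fst _ (adj_mid_right i.val))⟩

lemma pathData_iso (n : ℕ) (hn : 3 ≤ n) (i : Fin (n + 1)) :
    (pathData n hn i).2.2.IsIsometricPath := by
  unfold pathData
  by_cases hc : i.val = n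
  · rw [dif_pos hc]
    exact quad_iso _ _ _ (by dsimp only; decide) (by dsimp only; decide) (by dsimp only; simp [Fin.ext_iff]; omega)
  · rw [dif_neg hc]
    by_cases hc2 : i.val = n - 1
    · rw [dif_pos hc2]
      exact quad_iso _ _ _ (by dsimp only; decide) (by dsimp only; decide) (by dsimp only; simp [Fin.ext_iff])
    · rw [dif_neg hc2]
      exact quad_iso _ _ _ (by dsimp only; decide) (by dsimp only; decide) (by dsimp only; simp [Fin.ext_iff])

lemma pathData_cover (n : ℕ) (hn : 3 ≤ n) (hodd : Odd n) (w : V3 n) :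
    ∃ i : Fin (n + 1), w ∈ (pathData n hn i).2.2.support := by
  have hn2 : n % 2 = 1 := Nat.odd_iff.mp hodd
  obtain ⟨⟨a, b⟩, c⟩ := w
  have hc := c.isLt
  fin_cases a <;> fin_cases b
  · -- column (0,0)
    by_cases h1 : c.val = n - 1
    · refine ⟨⟨n, by omega⟩, ?_⟩
      unfold pathData; rw [dif_pos (by simp)]
      exact mem_quad _ _ _ _ (Or.inl (by simp [Prod.ext_iff, Fin.ext_iff]; omega))
    · refine ⟨⟨c.val, by omega⟩, ?_⟩
      unfold pathData
      rw [dif_neg (by simp; omega), dif_neg (by simp; omega)]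
      exact mem_quad _ _ _ _ (Or.inl (by simp [Prod.ext_iff, Fin.ext_iff]))
  · -- column (0,1)
    by_cases h1 : c.val = 0
    · refine ⟨⟨n - 1, by omega⟩, ?_⟩
      unfold pathData
      rw [dif_neg (by simp; omega), dif_pos (by simp)]
      exact mem_quad _ _ _ _ (Or.inr (Or.inl (by simp [Prod.ext_iff, Fin.ext_iff]; omega)))
    · by_cases h2 : c.val % 2 = 1
      · refine ⟨⟨c.val, by omega⟩, ?_⟩
        unfold pathData
        rw [dif_neg (by simp; omega), dif_neg (by simp; omega)]
        exact mem_quad _ _ _ _ (Or.inr (Or.inl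
          (by simp [Prod.ext_iff, Fin.ext_iff, mid, Nat.mod_two_ne_zero.mpr h2])))
      · refine ⟨⟨c.val - 1, by omega⟩, ?_⟩
        unfold pathData
        rw [dif_neg (by simp; omega), dif_neg (by simp; omega)]
        have hm : (c.val - 1) % 2 = 1 := by omega
        exact mem_quad _ _ _ _ (Or.inr (Or.inr (Or.inl
          (by simp [Prod.ext_iff, Fin.ext_iff, mid, Nat.mod_two_ne_zero.mpr hm]; omega))))
  · -- column (1,0)
    by_cases h1 : c.val = n - 1
    · refine ⟨⟨n, by omega⟩, ?_⟩
      unfold pathData; rw [dif_pos (by simp)]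
      exact mem_quad _ _ _ _ (Or.inr (Or.inl (by simp [Prod.ext_iff, Fin.ext_iff]; omega)))
    · by_cases h2 : c.val % 2 = 0
      · refine ⟨⟨c.val, by omega⟩, ?_⟩
        unfold pathData
        rw [dif_neg (by simp; omega), dif_neg (by simp; omega)]
        exact mem_quad _ _ _ _ (Or.inr (Or.inl
          (by simp [Prod.ext_iff, Fin.ext_iff, mid, h2])))
      · refine ⟨⟨c.val - 1, by omega⟩, ?_⟩
        unfold pathData
        rw [dif_neg (by simp; omega), dif_neg (by simp; omega)]
        have hm : (c.val - 1) % 2 = 0 := by omega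
        exact mem_quad _ _ _ _ (Or.inr (Or.inr (Or.inl
          (by simp [Prod.ext_iff, Fin.ext_iff, mid, hm]; omega))))
  · -- column (1,1)
    by_cases h1 : c.val = 0
    · refine ⟨⟨n - 1, by omega⟩, ?_⟩
      unfold pathData
      rw [dif_neg (by simp; omega), dif_pos (by simp)]
      exact mem_quad _ _ _ _ (Or.inl (by simp [Prod.ext_iff, Fin.ext_iff]; omega))
    · refine ⟨⟨c.val - 1, by omega⟩, ?_⟩
      unfold pathData
      rw [dif_neg (by simp; omega), dif_neg (by simp; omega)]
      exact mem_quad _ _ _ _ (Or.inr (Or.inr (Or.inr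
        (by simp [Prod.ext_iff, Fin.ext_iff]; omega))))

theorem stmt_16 (n₃ : ℕ) (h : 3 ≤ n₃) (hodd : Odd n₃) :
    isometricPathNumber
        (SimpleGraph.boxProd (SimpleGraph.boxProd (completeGraph (Fin 2)) (completeGraph (Fin 2))) (completeGraph (Fin n₃))) ≤
      n₃ + 1 := by
  apply Nat.sInf_le
  exact ⟨fun i => (pathData n₃ h i).1, fun i => (pathData n₃ h i).2.1,
    fun i => (pathData n₃ h i).2.2, fun i => pathData_iso n₃ h i,
    fun w => pathData_cover n₃ h hodd w⟩
end
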